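/- arXiv:1806.06212 — 4 statements merged into one kernel-verified Lean document; each statement's English description precedes it below -/
import Mathlib

section
/- In any (0, 0, D)-coloring of the graph X0(D; v), obtained from D+1 pairwise disjoint copies of K4 by identifying one vertex from each copy into a single vertex v, the vertex v cannot receive the third color (the color whose class may induce maximum degree up to D). -/
open SimpleGraph

/-- `H` is a minor of `G`: branch sets are nonempty, connected, pairwise disjoint,
and edges of `H` are realized between branch sets. -/
def SimpleGraph.IsMinor {W V : Type*} (H : SimpleGraph W) (G : SimpleGraph V) : Prop :=
  ∃ f : W → Set V, (∀ w, (f w).Nonempty) ∧ (∀ w, (G.induce (f w)).Connected) ∧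
    (∀ w w', w ≠ w' → Disjoint (f w) (f w')) ∧
    (∀ w w', H.Adj w w' → ∃ a ∈ f w, ∃ b ∈ f w', G.Adj a b)

/-- A graph is planar iff it has no `K₅` minor and no `K₃,₃` minor (Wagner's theorem). -/
def SimpleGraph.Planar {V : Type*} (G : SimpleGraph V) : Prop :=
  ¬ (completeGraph (Fin 5)).IsMinor G ∧
    ¬ (completeBipartiteGraph (Fin 3) (Fin 3)).IsMinor G

/-- `G` contains no cycle of length `n` (as a subgraph). -/
def SimpleGraph.HasNoCycleOfLength {V : Type*} (G : SimpleGraph V) (n : ℕ) : Prop :=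
  ∀ (v : V) (w : G.Walk v v), w.IsCycle → w.length ≠ n

/-- `f` is a `(d 0, …, d (k-1))`-coloring of `G`: each vertex has at most `d (f v)`
neighbors in its own color class. -/
def SimpleGraph.IsDefectiveColoring {V : Type*} {k : ℕ} (G : SimpleGraph V)
    (d : Fin k → ℕ) (f : V → Fin k) : Prop :=
  ∀ v, {u | G.Adj v u ∧ f u = f v}.ncard ≤ d (f v)

/-- `G` is `(d 0, …, d (k-1))`-colorable. -/
def SimpleGraph.DefectiveColorable {V : Type*} {k : ℕ} (G : SimpleGraph V)
    (d : Fin k → ℕ) : Prop :=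
  ∃ f : V → Fin k, G.IsDefectiveColoring d f

/-- `X0 D`: `D+1` pairwise disjoint copies of `K₄` with one vertex of each
identified into the single vertex `v = none`. -/
def X0 (D : ℕ) : SimpleGraph (Option (Fin (D + 1) × Fin 3)) :=
  SimpleGraph.fromRel (fun a b =>
    (a = none ∧ b ≠ none) ∨ (∃ i j k, j ≠ k ∧ a = some (i, j) ∧ b = some (i, k)))

theorem stmt6 (D : ℕ) (f : Option (Fin (D + 1) × Fin 3) → Fin 3)
    (hf : (X0 D).IsDefectiveColoring ![0, 0, D] f) :
    f none ≠ 2 := by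
  intro h2
  -- helper: two distinct vertices in the same triangle cannot share a color ≠ 2
  have helper : ∀ (i : Fin (D + 1)) (j k : Fin 3), j ≠ k →
      f (some (i, j)) = f (some (i, k)) → f (some (i, j)) ≠ 2 → False := by
    intro i j k hjk heq hne2
    have hadj : (X0 D).Adj (some (i, j)) (some (i, k)) := by
      rw [X0, SimpleGraph.fromRel_adj]
      exact ⟨by simp [hjk], Or.inl (Or.inr ⟨i, j, k, hjk, rfl, rfl⟩)⟩
    have hmem : (some (i, k)) ∈ {u | (X0 D).Adj (some (i, j)) u ∧ f u = f (some (i, j))} :=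
      ⟨hadj, heq.symm⟩
    have hcard := hf (some (i, j))
    have hd0 : (![0, 0, D] : Fin 3 → ℕ) (f (some (i, j))) = 0 := by
      have hv : (f (some (i, j))).val < 3 := (f (some (i, j))).isLt
      have hv2 : (f (some (i, j))).val ≠ 2 := fun h => hne2 (Fin.ext h)
      interval_cases h : (f (some (i, j))).val
      · have : f (some (i, j)) = 0 := Fin.ext h
        rw [this]; rfl
      · have : f (some (i, j)) = 1 := Fin.ext h
        rw [this]; rfl
      · omega
    rw [hd0, Nat.le_zero] at hcard
    have hfin : {u | (X0 D).Adj (some (i, j)) u ∧ f u = f (some (i, j))}.Finite :=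
      Set.toFinite _
    rw [Set.ncard_eq_zero hfin] at hcard
    rw [hcard] at hmem
    exact hmem
  -- each triangle contains a vertex of color 2
  have key : ∀ i : Fin (D + 1), ∃ j : Fin 3, f (some (i, j)) = 2 := by
    intro i
    by_contra hno
    push_neg at hno
    have h0 := hno 0; have h1 := hno 1; have h2' := hno 2
    have v0 : (f (some (i, 0))).val ≠ 2 := fun h => h0 (Fin.ext h)
    have v1 : (f (some (i, 1))).val ≠ 2 := fun h => h1 (Fin.ext h)
    have v2 : (f (some (i, 2))).val ≠ 2 := fun h => h2' (Fin.ext h)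
    have l0 := (f (some (i, 0))).isLt
    have l1 := (f (some (i, 1))).isLt
    have l2 := (f (some (i, 2))).isLt
    have : (f (some (i, 0))).val = (f (some (i, 1))).val ∨
        (f (some (i, 0))).val = (f (some (i, 2))).val ∨
        (f (some (i, 1))).val = (f (some (i, 2))).val := by omega
    rcases this with h | h | h
    · exact helper i 0 1 (by decide) (Fin.ext h) h0
    · exact helper i 0 2 (by decide) (Fin.ext h) h0
    · exact helper i 1 2 (by decide) (Fin.ext h) h1
  choose g hg using key
  set S : Set (Option (Fin (D + 1) × Fin 3)) :=
    {u | (X0 D).Adj none u ∧ f u = f none} with hS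
  have hsub : ∀ i : Fin (D + 1), (some (i, g i)) ∈ S := by
    intro i
    constructor
    · rw [X0, SimpleGraph.fromRel_adj]
      exact ⟨by simp, Or.inl (Or.inl ⟨rfl, by simp⟩)⟩
    · rw [hg i, h2]
  have hinj : Set.InjOn (fun i : Fin (D + 1) => (some (i, g i) :
      Option (Fin (D + 1) × Fin 3))) Set.univ := by
    intro a _ b _ hab
    simpa using congrArg (fun x => x.map Prod.fst) hab
  have hle : (Set.univ : Set (Fin (D + 1))).ncard ≤ S.ncard :=
    Set.ncard_le_ncard_of_injOn _ (fun i _ => hsub i) hinj (Set.toFinite _)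
  rw [Set.ncard_univ, Nat.card_eq_fintype_card, Fintype.card_fin] at hle
  have hcard := hf none
  rw [h2] at hcard
  have : (![0, 0, D] : Fin 3 → ℕ) 2 = D := rfl
  rw [this] at hcard
  rw [hS, h2] at hle
  omega
end

section
/- Let G be a vertex-minimal counterexample to the claim that every planar graph with no 4-cycles is (0, 0, 117)-colorable. Then every vertex of G of degree at most 119 has a neighbor of degree at least 120. -/
open SimpleGraph

/-!
Delete `v` and colour the rest by minimality: induced subgraphs of a planar `C₄`-free graph are
planar and `C₄`-free. Among these colourings take one with as few vertices of colour `2` as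
possible; then every vertex of colour `2` has neighbours of both colours `0` and `1`, since
otherwise it could be moved to the missing colour. If `0` or `1` is missing from `N(v)`, give it
to `v`. Otherwise colour `v` with `2`: then `v` has at most `deg v - 2 ≤ 117` neighbours of
colour `2`, and a neighbour `u` of colour `2` already had, besides `v` and its neighbours of
colours `0` and `1`, at most `deg u - 3 ≤ 116` of them, so it can afford one more.
-/

open Function

theorem Set.ncard_add_ncard_le_of_disjoint {α : Type*} [Finite α] {s t u : Set α}
    (hst : Disjoint s t) (hs : s ⊆ u) (ht : t ⊆ u) : s.ncard + t.ncard ≤ u.ncard :=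
  (Set.ncard_union_eq hst).symm.trans_le (Set.ncard_le_ncard (Set.union_subset hs ht))

namespace SimpleGraph

section Minor

variable {V W X : Type*} {G' : SimpleGraph X} {G : SimpleGraph V}

theorem IsMinor.trans_injective_hom {H : SimpleGraph W} (h : H.IsMinor G') (φ : G' →g G)
    (hφ : Injective φ) : H.IsMinor G := by
  obtain ⟨f, hne, hconn, hdisj, hadj⟩ := h
  refine ⟨fun w => φ '' f w, fun w => (hne w).image φ, fun w => ?_, fun w w' hw => ?_,
    fun w w' hw => ?_⟩
  · let ψ : G'.induce (f w) →g G.induce (φ '' f w) :=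
      ⟨fun x => ⟨φ x, Set.mem_image_of_mem φ x.2⟩, fun h => φ.map_adj h⟩
    refine (hconn w).map ψ ?_
    rintro ⟨_, x, hx, rfl⟩
    exact ⟨⟨x, hx⟩, rfl⟩
  · exact (Set.disjoint_image_iff hφ).mpr (hdisj w w' hw)
  · obtain ⟨a, ha, b, hb, hab⟩ := hadj w w' hw
    exact ⟨φ a, Set.mem_image_of_mem φ ha, φ b, Set.mem_image_of_mem φ hb, φ.map_adj hab⟩

theorem Planar.of_injective_hom (hG : G.Planar) (φ : G' →g G) (hφ : Injective φ) :
    G'.Planar :=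
  ⟨fun h => hG.1 (h.trans_injective_hom φ hφ), fun h => hG.2 (h.trans_injective_hom φ hφ)⟩

theorem HasNoCycleOfLength.of_injective_hom {n : ℕ} (hG : G.HasNoCycleOfLength n)
    (φ : G' →g G) (hφ : Injective φ) : G'.HasNoCycleOfLength n := fun v c hc hn =>
  hG (φ v) (c.map φ) (hc.map hφ) ((Walk.length_map φ c).trans hn)

end Minor

section DefectiveColoring

variable {V : Type*} {k : ℕ} {D : Fin k → ℕ} {G : SimpleGraph V} {f : V → Fin k}

def sameColorNeighborSet (G : SimpleGraph V) (f : V → Fin k) (v : V) : Set V :=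
  {u | G.Adj v u ∧ f u = f v}

theorem isDefectiveColoring_iff :
    G.IsDefectiveColoring D f ↔ ∀ v, (G.sameColorNeighborSet f v).ncard ≤ D (f v) :=
  Iff.rfl

theorem DefectiveColorable.of_induce [NeZero k] {s : Set V} (hs : ∀ x ∉ s, ∀ y, ¬ G.Adj x y)
    (h : (G.induce s).DefectiveColorable D) : G.DefectiveColorable D := by
  classical
  obtain ⟨f, hf⟩ := h
  let g : V → Fin k := fun x => if hx : x ∈ s then f ⟨x, hx⟩ else 0
  have hg : ∀ x (hx : x ∈ s), g x = f ⟨x, hx⟩ := fun x hx => dif_pos hx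
  refine ⟨g, isDefectiveColoring_iff.mpr fun x => ?_⟩
  by_cases hx : x ∈ s
  · have himage : G.sameColorNeighborSet g x =
        Subtype.val '' (G.induce s).sameColorNeighborSet f ⟨x, hx⟩ := by
      ext y
      constructor
      · rintro ⟨hxy, hgy⟩
        have hy : y ∈ s := by_contra fun hy => hs y hy x hxy.symm
        exact ⟨⟨y, hy⟩, ⟨hxy, by rwa [hg y hy, hg x hx] at hgy⟩, rfl⟩
      · rintro ⟨⟨y, hy⟩, ⟨hxy, hfy⟩, rfl⟩
        exact ⟨hxy, by rwa [hg y hy, hg x hx]⟩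
    rw [himage, Set.ncard_image_of_injective _ Subtype.val_injective, hg x hx]
    exact hf ⟨x, hx⟩
  · have hempty : G.sameColorNeighborSet g x = ∅ :=
      Set.eq_empty_of_forall_notMem fun y hy => hs x hx y hy.1
    rw [hempty, Set.ncard_empty]
    exact Nat.zero_le _

theorem DefectiveColorable.deleteIncidenceSet_of_induce_compl [NeZero k] {v : V}
    (h : (G.induce {v}ᶜ).DefectiveColorable D) :
    (G.deleteIncidenceSet v).DefectiveColorable D := by
  refine of_induce (s := {v}ᶜ) (fun x hx y hxy => ?_) ?_
  · exact (deleteIncidenceSet_adj.mp hxy).2.1 (Set.notMem_compl_iff.mp hx)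
  · rwa [induce_deleteIncidenceSet_of_notMem G (by simp : v ∉ ({v}ᶜ : Set V))]

variable [DecidableEq V] {u v w : V} {c : Fin k}

theorem sameColorNeighborSet_update_self (hc : ∀ y, G.Adj u y → f y ≠ c) :
    G.sameColorNeighborSet (update f u c) u = ∅ := by
  refine Set.eq_empty_of_forall_notMem fun y ⟨hy, hyc⟩ => hc y hy ?_
  rwa [update_self, update_of_ne hy.ne'] at hyc

theorem sameColorNeighborSet_update_subset (hw : w ≠ u) (hc : ∀ y, G.Adj u y → f y ≠ c) :
    G.sameColorNeighborSet (update f u c) w ⊆ G.sameColorNeighborSet f w := by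
  rintro y ⟨hy, hyw⟩
  rw [update_of_ne hw] at hyw
  obtain rfl | hyu := eq_or_ne y u
  · rw [update_self] at hyw
    exact absurd hyw.symm (hc w hy.symm)
  · exact ⟨hy, by rwa [update_of_ne hyu] at hyw⟩

theorem sameColorNeighborSet_update_subset_insert (hw : w ≠ v) :
    G.sameColorNeighborSet (update f v c) w ⊆
      insert v ((G.deleteIncidenceSet v).sameColorNeighborSet f w) := by
  rintro y ⟨hy, hyw⟩
  rw [update_of_ne hw] at hyw
  obtain rfl | hyv := eq_or_ne y v
  · exact Set.mem_insert _ _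
  · rw [update_of_ne hyv] at hyw
    exact Or.inr ⟨deleteIncidenceSet_adj.mpr ⟨hy, hw, hyv⟩, hyw⟩

theorem sameColorNeighborSet_update_subset_of_notMem (hw : w ≠ v)
    (hv : v ∉ G.sameColorNeighborSet (update f v c) w) :
    G.sameColorNeighborSet (update f v c) w ⊆
      (G.deleteIncidenceSet v).sameColorNeighborSet f w :=
  (Set.subset_insert_iff_of_notMem hv).mp (sameColorNeighborSet_update_subset_insert hw)

variable [Finite V]

theorem IsDefectiveColoring.update_of_forall_adj_ne (hf : G.IsDefectiveColoring D f)
    (hc : ∀ y, G.Adj u y → f y ≠ c) : G.IsDefectiveColoring D (update f u c) := by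
  refine isDefectiveColoring_iff.mpr fun w => ?_
  obtain rfl | hw := eq_or_ne w u
  · rw [sameColorNeighborSet_update_self hc, Set.ncard_empty]
    exact Nat.zero_le _
  · rw [update_of_ne hw]
    exact (Set.ncard_le_ncard (sameColorNeighborSet_update_subset hw hc)).trans (hf w)

theorem IsDefectiveColoring.update_of_deleteIncidenceSet
    (hf : (G.deleteIncidenceSet v).IsDefectiveColoring D f) (hc : ∀ y, G.Adj v y → f y ≠ c) :
    G.IsDefectiveColoring D (update f v c) := by
  refine isDefectiveColoring_iff.mpr fun w => ?_
  obtain rfl | hw := eq_or_ne w v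
  · rw [sameColorNeighborSet_update_self hc, Set.ncard_empty]
    exact Nat.zero_le _
  · have hv : v ∉ G.sameColorNeighborSet (update f v c) w := fun ⟨hwv, hcw⟩ => by
      rw [update_self, update_of_ne hw] at hcw
      exact hc w hwv.symm hcw.symm
    rw [update_of_ne hw]
    exact (Set.ncard_le_ncard (sameColorNeighborSet_update_subset_of_notMem hw hv)).trans (hf w)

theorem DefectiveColorable.exists_forall_exists_adj (h : G.DefectiveColorable D) (i : Fin k) :
    ∃ f, G.IsDefectiveColoring D f ∧ ∀ u, f u = i → ∀ c ≠ i, ∃ y, G.Adj u y ∧ f y = c := by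
  obtain ⟨f, hf, hmin⟩ :=
    Set.exists_min_image {f | G.IsDefectiveColoring D f} (fun f => (f ⁻¹' {i}).ncard)
      (Set.toFinite _) h
  refine ⟨f, hf, fun u hu c hci => ?_⟩
  by_contra! hc
  have hsub : update f u c ⁻¹' {i} ⊂ f ⁻¹' {i} := by
    have hle : update f u c ⁻¹' {i} ⊆ f ⁻¹' {i} := fun y hy => by
      obtain rfl | hyu := eq_or_ne y u
      · exact hu
      · rwa [Set.mem_preimage, update_of_ne hyu] at hy
    refine (Set.ssubset_iff_of_subset hle).mpr ⟨u, hu, ?_⟩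
    simpa [Set.mem_preimage, update_self] using hci
  exact (Set.ncard_lt_ncard hsub).not_ge (hmin _ (hf.update_of_forall_adj_ne hc))

end DefectiveColoring

section ZeroZeroDefect

variable {V : Type*} [Finite V] {G : SimpleGraph V} {f : V → Fin 3} {u v : V} {d : ℕ}

theorem ncard_sameColorNeighborSet_deleteIncidenceSet_lt (huv : G.Adj u v)
    (hu : (G.neighborSet u).ncard ≤ d + 2) (hfu : f u = 2)
    (hsees : ∀ c ≠ 2, ∃ y, (G.deleteIncidenceSet v).Adj u y ∧ f y = c) :
    ((G.deleteIncidenceSet v).sameColorNeighborSet f u).ncard < d := by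
  obtain ⟨y₀, hy₀, hf₀⟩ := hsees 0 (by decide)
  obtain ⟨y₁, hy₁, hf₁⟩ := hsees 1 (by decide)
  rw [deleteIncidenceSet_adj] at hy₀ hy₁
  have hy : ({v, y₀, y₁} : Set V).ncard = 3 := by
    refine Set.ncard_eq_three.mpr ⟨v, y₀, y₁, hy₀.2.2.symm, hy₁.2.2.symm, ?_, rfl⟩
    exact fun h => by simp [h, hf₁] at hf₀
  have hdisj : Disjoint ((G.deleteIncidenceSet v).sameColorNeighborSet f u) {v, y₀, y₁} := by
    refine Set.disjoint_right.mpr ?_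
    rintro y (rfl | rfl | rfl) ⟨hy, hy2⟩
    · exact (deleteIncidenceSet_adj.mp hy).2.2 rfl
    all_goals simp_all
  have := Set.ncard_add_ncard_le_of_disjoint (u := G.neighborSet u) hdisj
    (fun y hy => deleteIncidenceSet_le G v hy.1)
    (Set.insert_subset huv (Set.pair_subset hy₀.1 hy₁.1))
  omega

variable [DecidableEq V]

theorem ncard_sameColorNeighborSet_update_two_self (hv : (G.neighborSet v).ncard ≤ d + 2)
    {x₀ x₁ : V} (hx₀ : G.Adj v x₀) (hx₁ : G.Adj v x₁) (hf₀ : f x₀ = 0) (hf₁ : f x₁ = 1) :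
    (G.sameColorNeighborSet (update f v 2) v).ncard ≤ d := by
  have hx : ({x₀, x₁} : Set V).ncard = 2 := Set.ncard_pair fun h => by simp [h, hf₁] at hf₀
  have hdisj : Disjoint (G.sameColorNeighborSet (update f v 2) v) {x₀, x₁} := by
    refine Set.disjoint_right.mpr ?_
    rintro y (rfl | rfl) ⟨hy, hy2⟩ <;> simp_all [update_of_ne hy.ne']
  have := Set.ncard_add_ncard_le_of_disjoint (u := G.neighborSet v) hdisj (fun y hy => hy.1)
    (Set.pair_subset hx₀ hx₁)
  omega

theorem IsDefectiveColoring.update_two_of_deleteIncidenceSet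
    (hf : (G.deleteIncidenceSet v).IsDefectiveColoring ![0, 0, d] f)
    (hsees : ∀ u, f u = 2 → ∀ c ≠ 2, ∃ y, (G.deleteIncidenceSet v).Adj u y ∧ f y = c)
    (hv : (G.neighborSet v).ncard ≤ d + 2)
    (hN : ∀ u, G.Adj v u → (G.neighborSet u).ncard ≤ d + 2)
    {x₀ x₁ : V} (hx₀ : G.Adj v x₀) (hx₁ : G.Adj v x₁) (hf₀ : f x₀ = 0) (hf₁ : f x₁ = 1) :
    G.IsDefectiveColoring ![0, 0, d] (update f v 2) := by
  refine isDefectiveColoring_iff.mpr fun w => ?_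
  obtain rfl | hw := eq_or_ne w v
  · rw [update_self]
    exact ncard_sameColorNeighborSet_update_two_self hv hx₀ hx₁ hf₀ hf₁
  rw [update_of_ne hw]
  by_cases hwv : G.Adj w v ∧ f w = 2
  · obtain ⟨hadj, hfw⟩ := hwv
    have hlt := ncard_sameColorNeighborSet_deleteIncidenceSet_lt hadj (hN w hadj.symm) hfw
      (hsees w hfw)
    have hinsert := (Set.ncard_le_ncard
      (sameColorNeighborSet_update_subset_insert (G := G) (f := f) (c := 2) hw)).trans
      (Set.ncard_insert_le v _)
    rw [hfw]
    change _ ≤ d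
    omega
  · have hv : v ∉ G.sameColorNeighborSet (update f v 2) w := fun ⟨hadj, h2⟩ => by
      rw [update_self, update_of_ne hw] at h2
      exact hwv ⟨hadj, h2.symm⟩
    exact (Set.ncard_le_ncard (sameColorNeighborSet_update_subset_of_notMem hw hv)).trans (hf w)

theorem DefectiveColorable.of_deleteIncidenceSet
    (h : (G.deleteIncidenceSet v).DefectiveColorable ![0, 0, d])
    (hv : (G.neighborSet v).ncard ≤ d + 2)
    (hN : ∀ u, G.Adj v u → (G.neighborSet u).ncard ≤ d + 2) :
    G.DefectiveColorable ![0, 0, d] := by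
  obtain ⟨f, hf, hsees⟩ := h.exists_forall_exists_adj 2
  by_cases h₀ : ∃ x₀, G.Adj v x₀ ∧ f x₀ = 0
  swap
  · exact ⟨_, hf.update_of_deleteIncidenceSet fun y hy hfy => h₀ ⟨y, hy, hfy⟩⟩
  by_cases h₁ : ∃ x₁, G.Adj v x₁ ∧ f x₁ = 1
  swap
  · exact ⟨_, hf.update_of_deleteIncidenceSet fun y hy hfy => h₁ ⟨y, hy, hfy⟩⟩
  obtain ⟨x₀, hx₀, hf₀⟩ := h₀
  obtain ⟨x₁, hx₁, hf₁⟩ := h₁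
  exact ⟨_, hf.update_two_of_deleteIncidenceSet hsees hv hN hx₀ hx₁ hf₀ hf₁⟩

end ZeroZeroDefect

end SimpleGraph

theorem stmt12 (V : Type) [Fintype V] (G : SimpleGraph V)
    (hp : G.Planar) (h4 : G.HasNoCycleOfLength 4)
    (hnc : ¬ G.DefectiveColorable ![0, 0, 117])
    (hmin : ∀ (W : Type) [Fintype W] (H : SimpleGraph W), H.Planar →
      H.HasNoCycleOfLength 4 → Fintype.card W < Fintype.card V →
      H.DefectiveColorable ![0, 0, 117]) :
    ∀ v : V, (G.neighborSet v).ncard ≤ 119 →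
      ∃ u, G.Adj v u ∧ 120 ≤ (G.neighborSet u).ncard := by
  classical
  intro v hv
  by_contra! hN
  let φ : G.induce {v}ᶜ ↪g G := Embedding.induce _
  have hcolor := hmin _ (G.induce {v}ᶜ) (hp.of_injective_hom φ.toHom φ.injective)
    (h4.of_injective_hom φ.toHom φ.injective)
    (Fintype.card_subtype_lt (x := v) (by simp))
  exact hnc (hcolor.deleteIncidenceSet_of_induce_compl.of_deleteIncidenceSet hv
    fun u hu => Nat.le_of_lt_succ (hN u hu))
end

section
/- If a set S of cycle lengths is such that, for some fixed nonnegative integer D, every planar graph containing no cycle whose length lies in S is (0, 0, D)-colorable, then 3 is in S or 4 is in S. -/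
open SimpleGraph

/-!
Attach `D + 1` copies of `K₄` at each vertex (hub) of a triangle. Every block is a `K₃` or a `K₄`,
so every cycle has length 3 or 4. Each hub is a cut vertex, so a connected branch set avoiding the
hubs lies in one pendant triangle and all its neighbouring branch sets meet the 4 vertices of that
`K₄`; with only three hubs this leaves no room for a `K₅` or `K₃,₃` minor.
In a `(0, 0, D)`-colouring every triangle has a vertex of colour 2. A hub of colour 2 would have a
colour-2 neighbour in each of its `D + 1` pendant `K₄`s, so no hub has colour 2, which is impossible
on the triangle of hubs.
-/

open Finset

namespace SimpleGraph

variable {V W : Type*}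

structure MinorModel (H : SimpleGraph W) (G : SimpleGraph V) where
  branch : W → Set V
  connected : ∀ w, (G.induce (branch w)).Connected
  disjoint : Pairwise fun w w' => Disjoint (branch w) (branch w')
  exists_adj : ∀ w w', H.Adj w w' → ∃ a ∈ branch w, ∃ b ∈ branch w', G.Adj a b

theorem IsMinor.nonempty_minorModel {H : SimpleGraph W} {G : SimpleGraph V} :
    H.IsMinor G → Nonempty (H.MinorModel G) :=
  fun ⟨f, _, hconn, hdisj, hadj⟩ => ⟨⟨f, hconn, hdisj, hadj⟩⟩

namespace MinorModel

variable {H : SimpleGraph W} {G : SimpleGraph V} (M : H.MinorModel G)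

theorem eq_of_mem_branch {w w' : W} {x : V} (hw : x ∈ M.branch w) (hw' : x ∈ M.branch w') :
    w = w' := by
  by_contra hne
  exact Set.disjoint_left.mp (M.disjoint hne) hw hw'

theorem card_le_of_forall_exists_mem {T : Finset W} {C : Finset V}
    (hT : ∀ w ∈ T, ∃ x ∈ C, x ∈ M.branch w) : #T ≤ #C :=
  card_le_card_of_forall_subsingleton (fun w x => x ∈ M.branch w) hT
    fun _ _ _ hw _ hw' => M.eq_of_mem_branch hw.2 hw'.2

end MinorModel

variable {G : SimpleGraph V}

theorem Walk.mem_support_of_forall_adj {T : Set V} {c : V}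
    (hT : ∀ x ∈ T, ∀ y, G.Adj x y → y ∈ T ∨ y = c) :
    ∀ {a b : V} (p : G.Walk a b), a ∈ T → b ∉ T → c ∈ p.support
  | _, _, .nil, ha, hb => absurd ha hb
  | _, _, .cons hadj p, ha, hb => by
    rcases hT _ ha _ hadj with hy | rfl
    · exact List.mem_cons_of_mem _ (mem_support_of_forall_adj hT p hy hb)
    · simp

theorem Connected.mem_of_forall_walk_mem_support {S : Set V} (hS : (G.induce S).Connected)
    {a b c : V} (ha : a ∈ S) (hb : b ∈ S) (hsep : ∀ p : G.Walk a b, c ∈ p.support) : c ∈ S := by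
  obtain ⟨p⟩ := hS.preconnected ⟨a, ha⟩ ⟨b, hb⟩
  have hc : c ∈ (p.map (Embedding.induce S).toHom).support := hsep _
  rw [Walk.support_map] at hc
  obtain ⟨x, -, rfl⟩ := List.mem_map.mp hc
  exact x.2

theorem Walk.IsCycle.not_forall_mem_support {u a b c : V} {p : G.Walk u u} (hp : p.IsCycle)
    (ha : a ∈ p.support) (hb : b ∈ p.support) (hca : c ≠ a) (hcb : c ≠ b) :
    ¬ ∀ q : G.Walk a b, c ∈ q.support := by
  classical
  intro hsep
  set p' := p.rotate a ha
  have hb' : b ∈ p'.support := (p.mem_support_rotate_iff a ha).mpr hb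
  set q₁ := p'.takeUntil b hb'
  set q₂ := p'.dropUntil b hb'
  have h₁ : c ∈ q₁.support.tail := by
    have := hsep q₁
    rw [← Walk.cons_tail_support] at this
    exact (List.mem_cons.mp this).resolve_left hca
  have h₂ : c ∈ q₂.support.tail := by
    have := hsep q₂.reverse
    rw [Walk.support_reverse, List.mem_reverse, ← Walk.cons_tail_support] at this
    exact (List.mem_cons.mp this).resolve_left hcb
  have hnodup : p'.support.tail.Nodup := (hp.rotate ha).support_nodup
  rw [← p'.take_spec hb', Walk.tail_support_append, List.nodup_append] at hnodup
  exact hnodup.2.2 c h₁ c h₂ rfl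

theorem Walk.IsCycle.length_le_card {u : V} {p : G.Walk u u} (hp : p.IsCycle) {C : Finset V}
    (hC : ∀ x ∈ p.support, x ∈ C) : p.length ≤ #C := by
  classical
  calc p.length = #p.support.tail.toFinset := by
        rw [List.toFinset_card_of_nodup hp.support_nodup, List.length_tail, length_support]; rfl
    _ ≤ #C := card_le_card fun x hx => hC x (List.mem_of_mem_tail (List.mem_toFinset.mp hx))

theorem IsDefectiveColoring.ne_of_adj [Finite V] {k : ℕ} {d : Fin k → ℕ} {f : V → Fin k}
    (hf : G.IsDefectiveColoring d f) {u v : V} (huv : G.Adj u v) (hv : d (f v) = 0) :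
    f u ≠ f v := by
  intro heq
  have := hf v
  rw [hv, Nat.le_zero, Set.ncard_eq_zero] at this
  exact this.subset ⟨huv.symm, heq⟩ |>.elim

theorem IsDefectiveColoring.ncard_le [Finite V] {k : ℕ} {d : Fin k → ℕ} {f : V → Fin k}
    (hf : G.IsDefectiveColoring d f) {v : V} {N : Set V} (hN : ∀ u ∈ N, G.Adj v u ∧ f u = f v) :
    N.ncard ≤ d (f v) :=
  (Set.ncard_le_ncard hN (Set.toFinite _)).trans (hf v)

theorem IsDefectiveColoring.eq_two_of_isTriangle [Finite V] {D : ℕ} {f : V → Fin 3}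
    (hf : G.IsDefectiveColoring ![0, 0, D] f) {a b c : V}
    (hab : G.Adj a b) (hac : G.Adj a c) (hbc : G.Adj b c) :
    f a = 2 ∨ f b = 2 ∨ f c = 2 := by
  have hzero : ∀ {x}, f x ≠ 2 → (![0, 0, D] : Fin 3 → ℕ) (f x) = 0 := fun {x} hx => by
    generalize f x = i at hx; fin_cases i <;> simp_all
  by_contra! h
  have := hf.ne_of_adj hab (hzero h.2.1)
  have := hf.ne_of_adj hac (hzero h.2.2)
  have := hf.ne_of_adj hbc (hzero h.2.2)
  omega

end SimpleGraph

namespace TriangleOfK4s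

/-- `.inl h` is the hub `h`; `.inr (h, i, j)` is vertex `j` of the `i`-th triangle attached to
hub `h`, which spans a `K₄` together with the hub. -/
abbrev Vertex (D : ℕ) : Type := Fin 3 ⊕ Fin 3 × Fin (D + 1) × Fin 3

def Adj (D : ℕ) : Vertex D → Vertex D → Prop
  | .inl h, .inl h' => h ≠ h'
  | .inl h, .inr (h', _, _) => h = h'
  | .inr (h, _, _), .inl h' => h = h'
  | .inr (h, i, j), .inr (h', i', j') => h = h' ∧ i = i' ∧ j ≠ j'

def graph (D : ℕ) : SimpleGraph (Vertex D) where
  Adj := Adj D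
  symm := ⟨by rintro (h | ⟨h, i, j⟩) (h' | ⟨h', i', j'⟩) <;> simp only [Adj] <;> tauto⟩
  loopless := ⟨by rintro (h | ⟨h, i, j⟩) <;> simp [Adj]⟩

variable {D : ℕ}

def tri (h : Fin 3) (i : Fin (D + 1)) : Set (Vertex D) := Set.range fun j => .inr (h, i, j)

def block (h : Fin 3) (i : Fin (D + 1)) : Finset (Vertex D) :=
  insert (.inl h) (univ.image fun j => .inr (h, i, j))

def hubs (D : ℕ) : Finset (Vertex D) := univ.image .inl

theorem mem_block {h : Fin 3} {i : Fin (D + 1)} {x : Vertex D} :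
    x ∈ block h i ↔ x = .inl h ∨ x ∈ tri h i := by
  simp [block, tri, eq_comm]

theorem card_block_le (h : Fin 3) (i : Fin (D + 1)) : #(block h i) ≤ 4 :=
  (card_insert_le _ _).trans (Nat.succ_le_succ ((card_image_le).trans (by simp)))

theorem card_hubs_le : #(hubs D) ≤ 3 := card_image_le.trans (by simp)

theorem inl_notMem_tri {h h' : Fin 3} {i : Fin (D + 1)} : (.inl h' : Vertex D) ∉ tri h i := by
  rintro ⟨j, hj⟩
  cases hj

theorem eq_of_mem_tri_of_mem_tri {h h' : Fin 3} {i i' : Fin (D + 1)} {x : Vertex D}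
    (hx : x ∈ tri h i) (hx' : x ∈ tri h' i') : h = h' ∧ i = i' := by
  obtain ⟨j, rfl⟩ := hx
  obtain ⟨j', hj'⟩ := hx'
  simp only [Sum.inr.injEq, Prod.mk.injEq] at hj'
  exact ⟨hj'.1.symm, hj'.2.1.symm⟩

theorem adj_of_ne {h : Fin 3} {i : Fin (D + 1)} {j j' : Fin 3} (hj : j ≠ j') :
    (graph D).Adj (.inr (h, i, j)) (.inr (h, i, j')) := ⟨rfl, rfl, hj⟩

theorem adj_tri {h : Fin 3} {i : Fin (D + 1)} :
    ∀ x ∈ tri h i, ∀ y, (graph D).Adj x y → y ∈ tri h i ∨ y = .inl h := by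
  rintro _ ⟨j, rfl⟩ (h' | ⟨h', i', j'⟩) hadj
  · exact .inr (congrArg Sum.inl hadj.symm)
  · obtain ⟨rfl, rfl, -⟩ := hadj
    exact .inl ⟨j', rfl⟩

theorem mem_block_of_adj {h : Fin 3} {i : Fin (D + 1)} {x y : Vertex D} (hx : x ∈ tri h i)
    (hxy : (graph D).Adj x y) : y ∈ block h i :=
  mem_block.mpr (adj_tri x hx y hxy).symm

theorem inl_mem_support {h : Fin 3} {i : Fin (D + 1)} {a b : Vertex D} (p : (graph D).Walk a b)
    (ha : a ∈ tri h i) (hb : b ∉ tri h i) : .inl h ∈ p.support :=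
  p.mem_support_of_forall_adj adj_tri ha hb

theorem exists_subset_tri {S : Set (Vertex D)} (hS : ((graph D).induce S).Connected)
    (hhub : ∀ h, .inl h ∉ S) : ∃ h i, S ⊆ tri h i := by
  obtain ⟨⟨a, ha⟩⟩ := hS.nonempty
  rcases a with h | ⟨h, i, j⟩
  · exact absurd ha (hhub h)
  refine ⟨h, i, fun b hb => ?_⟩
  by_contra hbt
  exact hhub h (hS.mem_of_forall_walk_mem_support ha hb fun p => inl_mem_support p ⟨j, rfl⟩ hbt)

theorem length_of_isCycle {v : Vertex D} {p : (graph D).Walk v v} (hp : p.IsCycle) :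
    p.length = 3 ∨ p.length = 4 := by
  have h3 := hp.three_le_length
  suffices p.length ≤ 4 by omega
  by_cases hx : ∃ h i, ∃ x ∈ p.support, x ∈ tri h i
  · obtain ⟨h, i, x, hx, hxt⟩ := hx
    refine (hp.length_le_card fun b hb => ?_).trans (card_block_le h i)
    by_contra hbC
    rw [mem_block, not_or] at hbC
    exact hp.not_forall_mem_support hx hb (fun hxh => inl_notMem_tri (hxh ▸ hxt)) (Ne.symm hbC.1)
      fun q => inl_mem_support q hxt hbC.2
  · push Not at hx
    refine (hp.length_le_card (C := hubs D) fun b hb => ?_).trans (card_hubs_le.trans (by omega))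
    rcases b with h | ⟨h, i, j⟩
    · simp [hubs]
    · exact absurd ⟨j, rfl⟩ (hx h i _ hb)

theorem hasNoCycleOfLength_of_ne {n : ℕ} (h3 : n ≠ 3) (h4 : n ≠ 4) :
    (graph D).HasNoCycleOfLength n := fun _ _ hp hlen => by
  rcases length_of_isCycle hp with h | h <;> omega

variable {W : Type*} {H : SimpleGraph W} (M : H.MinorModel (graph D))

theorem exists_mem_block_of_adj {w w' : W} {h : Fin 3} {i : Fin (D + 1)}
    (hw : M.branch w ⊆ tri h i) (hadj : H.Adj w w') : ∃ x ∈ block h i, x ∈ M.branch w' := by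
  obtain ⟨a, ha, b, hb, hab⟩ := M.exists_adj w w' hadj
  exact ⟨b, mem_block_of_adj (hw ha) hab, hb⟩

theorem card_le_four_of_subset_tri {h : Fin 3} {i : Fin (D + 1)} {T : Finset W}
    (hT : ∀ w' ∈ T, ∃ w, M.branch w ⊆ tri h i ∧ (w' = w ∨ H.Adj w w')) : #T ≤ 4 := by
  refine (M.card_le_of_forall_exists_mem fun w' hw' => ?_).trans (card_block_le h i)
  obtain ⟨w, hw, rfl | hadj⟩ := hT w' hw'
  · obtain ⟨⟨a, ha⟩⟩ := (M.connected w').nonempty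
    exact ⟨a, mem_block.mpr (.inr (hw ha)), ha⟩
  · exact exists_mem_block_of_adj M hw hadj

theorem exists_finset_inl_notMem_branch [Fintype W] :
    ∃ F : Finset W, Fintype.card W ≤ #F + 3 ∧ ∀ w ∈ F, ∀ h, .inl h ∉ M.branch w := by
  classical
  refine ⟨univ.filter fun w => ∀ h, .inl h ∉ M.branch w, ?_, fun w hw => (mem_filter.mp hw).2⟩
  have hhub := M.card_le_of_forall_exists_mem (C := hubs D)
    (T := univ.filter fun w => ¬ ∀ h, .inl h ∉ M.branch w) fun w hw => by
      obtain ⟨h, hh⟩ := not_forall_not.mp (mem_filter.mp hw).2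
      exact ⟨.inl h, mem_image_of_mem _ (mem_univ h), hh⟩
  rw [← card_univ, ← card_filter_add_card_filter_not fun w => ∀ h, .inl h ∉ M.branch w]
  have := card_hubs_le (D := D)
  omega

theorem card_common_neighbors_le_two {w₁ w₂ : W} (hne : w₁ ≠ w₂)
    (hw₁ : ∀ h, .inl h ∉ M.branch w₁) (hw₂ : ∀ h, .inl h ∉ M.branch w₂) {T : Finset W}
    (hT : ∀ w ∈ T, H.Adj w₁ w ∧ H.Adj w₂ w) : #T ≤ 2 := by
  classical
  obtain ⟨h₁, i₁, hs₁⟩ := exists_subset_tri (M.connected w₁) hw₁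
  obtain ⟨h₂, i₂, hs₂⟩ := exists_subset_tri (M.connected w₂) hw₂
  by_cases hsame : h₁ = h₂ ∧ i₁ = i₂
  · obtain ⟨rfl, rfl⟩ := hsame
    have h₂T : w₂ ∉ T := fun hw => (hT _ hw).2.ne rfl
    have h₁T : w₁ ∉ insert w₂ T := by
      rw [mem_insert, not_or]
      exact ⟨hne, fun hw => (hT _ hw).1.ne rfl⟩
    have := card_le_four_of_subset_tri M (T := insert w₁ (insert w₂ T)) fun w hw => by
      rcases mem_insert.mp hw with rfl | hw
      · exact ⟨w, hs₁, .inl rfl⟩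
      rcases mem_insert.mp hw with rfl | hw
      · exact ⟨w, hs₂, .inl rfl⟩
      · exact ⟨w₁, hs₁, .inr (hT w hw).1⟩
    rw [card_insert_of_notMem h₁T, card_insert_of_notMem h₂T] at this
    omega
  -- a branch set meeting two different blocks has to pass through one of their hubs
  refine (M.card_le_of_forall_exists_mem (C := {.inl h₁, .inl h₂}) fun w hw => ?_).trans
    card_le_two
  obtain ⟨x₁, hx₁, hb₁⟩ := exists_mem_block_of_adj M hs₁ (hT w hw).1
  obtain ⟨x₂, hx₂, hb₂⟩ := exists_mem_block_of_adj M hs₂ (hT w hw).2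
  rcases mem_block.mp hx₁ with rfl | hx₁
  · exact ⟨_, by simp, hb₁⟩
  rcases mem_block.mp hx₂ with rfl | hx₂
  · exact ⟨_, by simp, hb₂⟩
  refine ⟨.inl h₁, by simp, (M.connected w).mem_of_forall_walk_mem_support hb₁ hb₂ fun p => ?_⟩
  exact inl_mem_support p hx₁ fun hx₂' => hsame (eq_of_mem_tri_of_mem_tri hx₂' hx₂)

theorem not_completeGraph_isMinor : ¬ (completeGraph (Fin 5)).IsMinor (graph D) := by
  intro hminor
  obtain ⟨M⟩ := hminor.nonempty_minorModel
  obtain ⟨F, hF, hfree⟩ := exists_finset_inl_notMem_branch M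
  obtain ⟨w, hw⟩ : F.Nonempty := by
    rw [← card_pos]
    simp only [Fintype.card_fin] at hF
    omega
  obtain ⟨h, i, hsub⟩ := exists_subset_tri (M.connected w) (hfree w hw)
  have := card_le_four_of_subset_tri M (T := univ) fun w' _ =>
    ⟨w, hsub, (eq_or_ne w' w).imp_right Ne.symm⟩
  simp at this

theorem exists_common_neighbors {a b : Fin 3 ⊕ Fin 3} (hab : a.isLeft = b.isLeft) :
    ∃ T : Finset (Fin 3 ⊕ Fin 3), #T = 3 ∧ ∀ w ∈ T,
      (completeBipartiteGraph (Fin 3) (Fin 3)).Adj a w ∧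
        (completeBipartiteGraph (Fin 3) (Fin 3)).Adj b w := by
  rcases a with a | a <;> rcases b with b | b <;> cases hab
  · exact ⟨univ.map .inr, by simp, by simp⟩
  · exact ⟨univ.map .inl, by simp, by simp⟩

theorem not_completeBipartiteGraph_isMinor :
    ¬ (completeBipartiteGraph (Fin 3) (Fin 3)).IsMinor (graph D) := by
  intro hminor
  obtain ⟨M⟩ := hminor.nonempty_minorModel
  obtain ⟨F, hF, hfree⟩ := exists_finset_inl_notMem_branch M
  obtain ⟨w₁, hw₁, w₂, hw₂, hne, hside⟩ :=
    exists_ne_map_eq_of_card_lt_of_maps_to (s := F) (t := univ) (f := Sum.isLeft)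
      (by simp only [Fintype.card_sum, Fintype.card_fin] at hF; simp; omega)
      fun _ _ => mem_coe.mpr (mem_univ _)
  obtain ⟨T, hT, hadj⟩ := exists_common_neighbors hside
  have := card_common_neighbors_le_two M hne (hfree _ hw₁) (hfree _ hw₂) hadj
  omega

theorem planar : (graph D).Planar := ⟨not_completeGraph_isMinor, not_completeBipartiteGraph_isMinor⟩

theorem color_inl_ne_two {f : Vertex D → Fin 3} (hf : (graph D).IsDefectiveColoring ![0, 0, D] f)
    (h : Fin 3) : f (.inl h) ≠ 2 := by
  intro h2
  have hK4 : ∀ i, ∃ j, f (.inr (h, i, j)) = 2 := fun i => by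
    rcases hf.eq_two_of_isTriangle (adj_of_ne (show (0 : Fin 3) ≠ 1 by decide))
      (adj_of_ne (show (0 : Fin 3) ≠ 2 by decide)) (adj_of_ne (show (1 : Fin 3) ≠ 2 by decide))
      with hj | hj | hj
    exacts [⟨0, hj⟩, ⟨1, hj⟩, ⟨2, hj⟩]
  choose j hj using hK4
  have := hf.ncard_le (v := .inl h) (N := Set.range fun i => .inr (h, i, j i)) <| by
    rintro _ ⟨i, rfl⟩
    exact ⟨rfl, (hj i).trans h2.symm⟩
  rw [Set.ncard_range_of_injective fun i i' hi => (by simpa using hi : i = i' ∧ _).1, h2] at this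
  simp at this

theorem not_defectiveColorable : ¬ (graph D).DefectiveColorable ![0, 0, D] := by
  rintro ⟨f, hf⟩
  rcases hf.eq_two_of_isTriangle (a := .inl 0) (b := .inl 1) (c := .inl 2)
    (show (0 : Fin 3) ≠ 1 by decide) (show (0 : Fin 3) ≠ 2 by decide)
    (show (1 : Fin 3) ≠ 2 by decide) with h | h | h
  exacts [color_inl_ne_two hf 0 h, color_inl_ne_two hf 1 h, color_inl_ne_two hf 2 h]

end TriangleOfK4s

theorem stmt14 (S : Set ℕ)
    (h : ∃ D : ℕ, ∀ (V : Type) [Fintype V] (G : SimpleGraph V), G.Planar →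
      (∀ n ∈ S, G.HasNoCycleOfLength n) → G.DefectiveColorable ![0, 0, D]) :
    3 ∈ S ∨ 4 ∈ S := by
  obtain ⟨D, hD⟩ := h
  by_contra! hS
  refine TriangleOfK4s.not_defectiveColorable (hD _ _ TriangleOfK4s.planar fun n hn => ?_)
  exact TriangleOfK4s.hasNoCycleOfLength_of_ne (by rintro rfl; exact hS.1 hn)
    (by rintro rfl; exact hS.2 hn)
end

section
/- Let G be a minimal counterexample (fewest vertices of degree at least 3, subject to that fewest edges) to the claim that every planar graph with no 4-cycles is (5, 5)-colorable, with a fixed plane embedding. Then a vertex v of degree at least 7 is incident with at most min(floor(d(v)/2), d(v) - 6) terrible 3-faces, where a 3-face is terrible if it is incident with a vertex of degree 2. -/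
open SimpleGraph

/-!
Two triangles through `v` sharing a second vertex would close a 4-cycle, so the terrible
triangles at `v` meet only in `v`. Choosing in each a vertex `x` of degree 2 and its partner `y`
gives `2t` distinct neighbours of `v`, hence `t ≤ d(v)/2`.

For the second bound delete all edges at the chosen vertices `x`: the resulting graph has fewer
edges and no more vertices of degree at least 3, so by minimality it has a `(5, 5)`-colouring `f`.
Extend `f` by giving `x` the colour of `v` if `y` has the other colour and already 5 neighbours of
its own colour, and the colour opposite to `v` otherwise. Every vertex except possibly `v` then
has at most 5 neighbours of its colour, so `v` must have at least 6 neighbours that are of its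
colour under `f` or are such saturated partners `y`. These are distinct from each other and from
the `t` vertices `x`, hence `t + 6 ≤ d(v)`.
-/

namespace SimpleGraph

variable {V : Type*}

theorem IsMinor.mono {W : Type*} {K : SimpleGraph W} {H G : SimpleGraph V} (hle : H ≤ G)
    (h : K.IsMinor H) : K.IsMinor G := by
  obtain ⟨f, hne, hconn, hdisj, hadj⟩ := h
  refine ⟨f, hne, fun w => (hconn w).mono fun a b hab => hle hab, hdisj, fun w w' hww' => ?_⟩
  obtain ⟨a, ha, b, hb, hab⟩ := hadj w w' hww'
  exact ⟨a, ha, b, hb, hle hab⟩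

theorem Planar.anti {H G : SimpleGraph V} (hle : H ≤ G) (h : G.Planar) : H.Planar :=
  ⟨fun hm => h.1 (hm.mono hle), fun hm => h.2 (hm.mono hle)⟩

theorem HasNoCycleOfLength.anti {H G : SimpleGraph V} {n : ℕ} (hle : H ≤ G)
    (h : G.HasNoCycleOfLength n) : H.HasNoCycleOfLength n := fun v w hw hlen =>
  h v (w.mapLe hle) (hw.mapLe hle) (by rwa [Walk.mapLe, Walk.length_map])

variable {G : SimpleGraph V}

theorem HasNoCycleOfLength.eq_of_adj_of_adj (h4 : G.HasNoCycleOfLength 4) {a b b' c : V}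
    (hac : a ≠ c) (hab : G.Adj a b) (hbc : G.Adj b c) (hab' : G.Adj a b') (hb'c : G.Adj b' c) :
    b = b' := by
  by_contra hbb'
  refine h4 a (.cons hab (.cons hbc (.cons hb'c.symm hab'.symm.toWalk))) ?_ rfl
  rw [Walk.isCycle_def, Walk.isTrail_def]
  refine ⟨?_, by simp, ?_⟩
  · simp [Sym2.eq, Sym2.rel_iff', Prod.ext_iff, hab.ne, hbc.ne, hab'.ne, hab.ne', hab'.ne',
      hb'c.ne', hac, hac.symm, hbb']
  · simp [hab.ne', hbc.ne, hab'.ne', hb'c.ne', hac.symm, hbb']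

theorem HasNoCycleOfLength.pair_eq_of_mem_of_mem (h4 : G.HasNoCycleOfLength 4)
    {v x y x' y' u : V} (hvx : G.Adj v x) (hvy : G.Adj v y) (hxy : G.Adj x y)
    (hvx' : G.Adj v x') (hvy' : G.Adj v y') (hxy' : G.Adj x' y')
    (hu : u ∈ ({x, y} : Set V)) (hu' : u ∈ ({x', y'} : Set V)) :
    ({x, y} : Set V) = {x', y'} := by
  have other : ∀ {x y : V}, G.Adj v x → G.Adj v y → G.Adj x y → u ∈ ({x, y} : Set V) →
      ∃ a, ({x, y} : Set V) = {u, a} ∧ G.Adj v a ∧ G.Adj a u ∧ G.Adj v u := by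
    rintro x y hvx hvy hxy (rfl | rfl)
    exacts [⟨y, rfl, hvy, hxy.symm, hvx⟩, ⟨x, Set.pair_comm _ _, hvx, hxy, hvy⟩]
  obtain ⟨a, ha, hva, hau, hvu⟩ := other hvx hvy hxy hu
  obtain ⟨a', ha', hva', ha'u, -⟩ := other hvx' hvy' hxy' hu'
  rw [ha, ha', h4.eq_of_adj_of_adj hvu.ne hva hau hva' ha'u]

def monoNeighborSet {α : Type*} (G : SimpleGraph V) (f : V → α) (u : V) : Set V :=
  {w | G.Adj u w ∧ f w = f u}

theorem isDefectiveColoring_iff_s16 {k : ℕ} {f : V → Fin 2} :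
    G.IsDefectiveColoring ![k, k] f ↔ ∀ u, (G.monoNeighborSet f u).ncard ≤ k := by
  have hconst : ∀ i : Fin 2, ![k, k] i = k := by intro i; fin_cases i <;> rfl
  simp only [IsDefectiveColoring, monoNeighborSet, hconst]

def isolate (G : SimpleGraph V) (A : Set V) : SimpleGraph V where
  Adj a b := G.Adj a b ∧ a ∉ A ∧ b ∉ A
  symm := ⟨fun _ _ h => ⟨h.1.symm, h.2.2, h.2.1⟩⟩
  loopless := ⟨fun _ h => G.loopless.irrefl _ h.1⟩

@[simp]
theorem isolate_adj {A : Set V} {a b : V} : (G.isolate A).Adj a b ↔ G.Adj a b ∧ a ∉ A ∧ b ∉ A :=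
  Iff.rfl

theorem isolate_le (A : Set V) : G.isolate A ≤ G := fun _ _ h => (isolate_adj.1 h).1

theorem isolate_lt {A : Set V} {a b : V} (ha : a ∈ A) (hab : G.Adj a b) : G.isolate A < G :=
  lt_of_le_of_ne (isolate_le A) fun h => (isolate_adj.1 (h.ge hab)).2.1 ha

theorem ncard_setOf_le_ncard_neighborSet_mono [Finite V] {H : SimpleGraph V} (hle : H ≤ G)
    (n : ℕ) : {w | n ≤ (H.neighborSet w).ncard}.ncard ≤ {w | n ≤ (G.neighborSet w).ncard}.ncard :=
  Set.ncard_le_ncard (fun _ hw => hw.trans (Set.ncard_le_ncard (fun _ h => hle h)))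

theorem _root_.Fin.one_sub_ne_self (c : Fin 2) : 1 - c ≠ c := by fin_cases c <;> decide

section TerribleFan

variable {ι : Type*} {v u : V} {S B : Set ι} {X Y : ι → V} {s : ι} {k : ℕ} {f : V → Fin 2}

/-- `S` indexes triangles `v (X s) (Y s)` in which `X s` has degree 2, any two of them
sharing only the vertex `v`. -/
structure IsTerribleFan (G : SimpleGraph V) (v : V) (S : Set ι) (X Y : ι → V) : Prop where
  neighborSet_eq : ∀ s ∈ S, G.neighborSet (X s) = {v, Y s}
  adj_right : ∀ s ∈ S, G.Adj v (Y s)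
  injOn_left : S.InjOn X
  injOn_right : S.InjOn Y
  left_ne_right : ∀ s ∈ S, ∀ s' ∈ S, X s ≠ Y s'

noncomputable def fanRecolor (v : V) (S B : Set ι) (X : ι → V) (f : V → Fin 2) (u : V) : Fin 2 :=
  open Classical in
  if u ∈ X '' B then f v else if u ∈ X '' S then 1 - f v else f u

theorem fanRecolor_of_notMem (hB : B ⊆ S) (hu : u ∉ X '' S) : fanRecolor v S B X f u = f u := by
  have huB : u ∉ X '' B := fun h => hu (Set.image_mono hB h)
  simp only [fanRecolor, if_neg huB, if_neg hu]

theorem fanRecolor_left_of_mem (hs : s ∈ B) : fanRecolor v S B X f (X s) = f v := by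
  simp only [fanRecolor, if_pos (Set.mem_image_of_mem X hs)]

theorem monoNeighborSet_fanRecolor_subset (hB : B ⊆ S) (hu : u ∉ X '' S) :
    G.monoNeighborSet (fanRecolor v S B X f) u ⊆ (G.isolate (X '' S)).monoNeighborSet f u ∪
      {w ∈ X '' S | G.Adj u w ∧ fanRecolor v S B X f w = f u} := by
  rintro w ⟨hadj, hcol⟩
  rw [fanRecolor_of_notMem hB hu] at hcol
  by_cases hw : w ∈ X '' S
  · exact Or.inr ⟨hw, hadj, hcol⟩
  · exact Or.inl ⟨isolate_adj.2 ⟨hadj, hu, hw⟩, by rwa [fanRecolor_of_notMem hB hw] at hcol⟩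

namespace IsTerribleFan

variable (hF : G.IsTerribleFan v S X Y)
include hF

theorem adj_left (hs : s ∈ S) : G.Adj v (X s) :=
  (show v ∈ G.neighborSet (X s) from hF.neighborSet_eq s hs ▸ Set.mem_insert _ _).symm

theorem eq_or_eq_of_adj_left (hs : s ∈ S) (hu : G.Adj (X s) u) : u = v ∨ u = Y s := by
  have hu' : u ∈ G.neighborSet (X s) := hu
  rwa [hF.neighborSet_eq s hs] at hu'

theorem center_notMem_image : v ∉ X '' S := by
  rintro ⟨s, hs, h⟩
  exact (hF.adj_left hs).ne h.symm

theorem right_notMem_image (hs : s ∈ S) : Y s ∉ X '' S := by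
  rintro ⟨s', hs', h⟩
  exact hF.left_ne_right s' hs' s hs h

theorem two_mul_ncard_le [Finite V] : 2 * S.ncard ≤ (G.neighborSet v).ncard := by
  have hsub : X '' S ∪ Y '' S ⊆ G.neighborSet v := Set.union_subset
    (by rintro _ ⟨s, hs, rfl⟩; exact hF.adj_left hs)
    (by rintro _ ⟨s, hs, rfl⟩; exact hF.adj_right s hs)
  have hdisj : Disjoint (X '' S) (Y '' S) := Set.disjoint_left.2 <| by
    rintro _ ⟨s, hs, rfl⟩ ⟨s', hs', h⟩
    exact hF.left_ne_right s hs s' hs' h.symm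
  have hle := Set.ncard_le_ncard hsub
  rwa [Set.ncard_union_eq hdisj, hF.injOn_left.ncard_image, hF.injOn_right.ncard_image,
    ← two_mul] at hle

theorem fanRecolor_left_of_notMem (hB : B ⊆ S) (hs : s ∈ S) (hsB : s ∉ B) :
    fanRecolor v S B X f (X s) = 1 - f v := by
  have hXB : X s ∉ X '' B := by
    rintro ⟨s', hs', h⟩
    exact hsB (hF.injOn_left (hB hs') hs h ▸ hs')
  simp only [fanRecolor, if_neg hXB, if_pos (Set.mem_image_of_mem X hs)]

theorem ncard_monoNeighborSet_fanRecolor_left_le_one (hB : B ⊆ S)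
    (hBY : ∀ s ∈ B, f (Y s) ≠ f v) (hs : s ∈ S) :
    (G.monoNeighborSet (fanRecolor v S B X f) (X s)).ncard ≤ 1 := by
  suffices ∃ a, G.monoNeighborSet (fanRecolor v S B X f) (X s) ⊆ {a} by
    obtain ⟨a, ha⟩ := this
    exact (Set.ncard_le_ncard ha (Set.finite_singleton a)).trans_eq (Set.ncard_singleton a)
  by_cases hsB : s ∈ B
  · refine ⟨v, fun w ⟨hadj, hcol⟩ => (hF.eq_or_eq_of_adj_left hs hadj).resolve_right ?_⟩
    rintro rfl
    rw [fanRecolor_of_notMem hB (hF.right_notMem_image hs), fanRecolor_left_of_mem hsB] at hcol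
    exact hBY s hsB hcol
  · refine ⟨Y s, fun w ⟨hadj, hcol⟩ => (hF.eq_or_eq_of_adj_left hs hadj).resolve_left ?_⟩
    rintro rfl
    rw [fanRecolor_of_notMem hB hF.center_notMem_image, hF.fanRecolor_left_of_notMem hB hs hsB]
      at hcol
    exact Fin.one_sub_ne_self _ hcol.symm

theorem ncard_monoNeighborSet_fanRecolor_center_le [Finite V] (hB : B ⊆ S) :
    (G.monoNeighborSet (fanRecolor v S B X f) v).ncard ≤
      ((G.isolate (X '' S)).monoNeighborSet f v).ncard + B.ncard := by
  have hsub : {w ∈ X '' S | G.Adj v w ∧ fanRecolor v S B X f w = f v} ⊆ X '' B := by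
    rintro _ ⟨⟨s, hs, rfl⟩, -, hcol⟩
    by_contra hsB
    rw [hF.fanRecolor_left_of_notMem hB hs fun h => hsB ⟨s, h, rfl⟩] at hcol
    exact Fin.one_sub_ne_self _ hcol
  calc _ ≤ ((G.isolate (X '' S)).monoNeighborSet f v ∪ X '' B).ncard :=
        Set.ncard_le_ncard ((monoNeighborSet_fanRecolor_subset hB hF.center_notMem_image).trans
          (Set.union_subset_union_right _ hsub))
    _ ≤ ((G.isolate (X '' S)).monoNeighborSet f v).ncard + (X '' B).ncard :=
        Set.ncard_union_le _ _
    _ = _ := by rw [(hF.injOn_left.mono hB).ncard_image]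

theorem ncard_monoNeighborSet_fanRecolor_right_le [Finite V] (hB : B ⊆ S)
    (hBY : ∀ s ∈ B, f (Y s) ≠ f v)
    (hnotB : ∀ s ∈ S, s ∉ B → f (Y s) ≠ f v →
      ((G.isolate (X '' S)).monoNeighborSet f (Y s)).ncard < k)
    (hf : ∀ u, ((G.isolate (X '' S)).monoNeighborSet f u).ncard ≤ k) (hs : s ∈ S) :
    (G.monoNeighborSet (fanRecolor v S B X f) (Y s)).ncard ≤ k := by
  have hsub : {w ∈ X '' S | G.Adj (Y s) w ∧ fanRecolor v S B X f w = f (Y s)} ⊆ {X s} := by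
    rintro _ ⟨⟨s', hs', rfl⟩, hadj, -⟩
    rcases hF.eq_or_eq_of_adj_left hs' hadj.symm with h | h
    · exact absurd h (hF.adj_right s hs).ne'
    · rw [hF.injOn_right hs hs' h]; rfl
  have hmono := monoNeighborSet_fanRecolor_subset (G := G) (v := v) (f := f) hB
    (hF.right_notMem_image hs)
  by_cases hX : fanRecolor v S B X f (X s) = f (Y s)
  · have hsB : s ∉ B := fun hsB => hBY s hsB (by rw [← hX, fanRecolor_left_of_mem hsB])
    have hne : f (Y s) ≠ f v := by
      rw [← hX, hF.fanRecolor_left_of_notMem hB hs hsB]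
      exact Fin.one_sub_ne_self _
    calc _ ≤ ((G.isolate (X '' S)).monoNeighborSet f (Y s) ∪ {X s}).ncard :=
          Set.ncard_le_ncard (hmono.trans (Set.union_subset_union_right _ hsub))
      _ ≤ ((G.isolate (X '' S)).monoNeighborSet f (Y s)).ncard + 1 :=
          (Set.ncard_union_le _ _).trans_eq (by rw [Set.ncard_singleton])
      _ ≤ k := hnotB s hs hsB hne
  · refine (Set.ncard_le_ncard fun w hw => (hmono hw).resolve_right fun hw' => hX ?_).trans (hf _)
    obtain rfl : w = X s := hsub hw'
    exact hw'.2.2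

theorem monoNeighborSet_fanRecolor_subset_of_notMem (hB : B ⊆ S) (hu : u ∉ X '' S)
    (huv : u ≠ v) (huY : u ∉ Y '' S) :
    G.monoNeighborSet (fanRecolor v S B X f) u ⊆ (G.isolate (X '' S)).monoNeighborSet f u := by
  refine fun w hw => (monoNeighborSet_fanRecolor_subset hB hu hw).resolve_right ?_
  rintro ⟨⟨s, hs, rfl⟩, hadj, -⟩
  rcases hF.eq_or_eq_of_adj_left hs hadj.symm with h | h
  exacts [huv h, huY ⟨s, hs, h.symm⟩]

theorem isDefectiveColoring_fanRecolor [Finite V] (hk : 1 ≤ k)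
    (hf : (G.isolate (X '' S)).IsDefectiveColoring ![k, k] f) (hB : B ⊆ S)
    (hBY : ∀ s ∈ B, f (Y s) ≠ f v)
    (hnotB : ∀ s ∈ S, s ∉ B → f (Y s) ≠ f v →
      ((G.isolate (X '' S)).monoNeighborSet f (Y s)).ncard < k)
    (hv : ((G.isolate (X '' S)).monoNeighborSet f v).ncard + B.ncard ≤ k) :
    G.IsDefectiveColoring ![k, k] (fanRecolor v S B X f) := by
  rw [isDefectiveColoring_iff_s16] at hf ⊢
  intro u
  by_cases huX : u ∈ X '' S
  · obtain ⟨s, hs, rfl⟩ := huX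
    exact (hF.ncard_monoNeighborSet_fanRecolor_left_le_one hB hBY hs).trans hk
  by_cases huv : u = v
  · subst huv
    exact (hF.ncard_monoNeighborSet_fanRecolor_center_le hB).trans hv
  by_cases huY : u ∈ Y '' S
  · obtain ⟨s, hs, rfl⟩ := huY
    exact hF.ncard_monoNeighborSet_fanRecolor_right_le hB hBY hnotB hf hs
  · exact (Set.ncard_le_ncard
      (hF.monoNeighborSet_fanRecolor_subset_of_notMem hB huX huv huY)).trans (hf u)

theorem le_ncard_monoNeighborSet_add_ncard [Finite V] (hk : 1 ≤ k)
    (hG : ¬ G.DefectiveColorable ![k, k])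
    (hf : (G.isolate (X '' S)).IsDefectiveColoring ![k, k] f) :
    k + 1 ≤ ((G.isolate (X '' S)).monoNeighborSet f v).ncard +
      {s ∈ S | f (Y s) ≠ f v ∧ k ≤ ((G.isolate (X '' S)).monoNeighborSet f (Y s)).ncard}.ncard := by
  by_contra! hlt
  refine hG ⟨_, hF.isDefectiveColoring_fanRecolor hk hf
    (B := {s ∈ S | f (Y s) ≠ f v ∧ k ≤ ((G.isolate (X '' S)).monoNeighborSet f (Y s)).ncard})
    (Set.sep_subset _ _) (fun _ hs => hs.2.1) (fun s hs hsB hne => ?_) (by omega)⟩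
  by_contra! hge
  exact hsB ⟨hs, hne, hge⟩

theorem ncard_monoNeighborSet_add_ncard_add_ncard_le [Finite V] (hB : B ⊆ S)
    (hBY : ∀ s ∈ B, f (Y s) ≠ f v) :
    ((G.isolate (X '' S)).monoNeighborSet f v).ncard + B.ncard + S.ncard ≤
      (G.neighborSet v).ncard := by
  have hdisj₁ : Disjoint ((G.isolate (X '' S)).monoNeighborSet f v) (Y '' B) :=
    Set.disjoint_left.2 <| by
      rintro _ hw ⟨s, hs, rfl⟩
      exact hBY s hs hw.2
  have hdisj₂ : Disjoint ((G.isolate (X '' S)).monoNeighborSet f v ∪ Y '' B) (X '' S) := by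
    refine Set.disjoint_union_left.2 ⟨Set.disjoint_left.2 fun w hw => (isolate_adj.1 hw.1).2.2,
      Set.disjoint_left.2 ?_⟩
    rintro _ ⟨s, hs, rfl⟩
    exact hF.right_notMem_image (hB hs)
  have hsub : (G.isolate (X '' S)).monoNeighborSet f v ∪ Y '' B ∪ X '' S ⊆ G.neighborSet v := by
    refine Set.union_subset (Set.union_subset (fun w hw => (isolate_adj.1 hw.1).1) ?_) ?_
    · rintro _ ⟨s, hs, rfl⟩
      exact hF.adj_right s (hB hs)
    · rintro _ ⟨s, hs, rfl⟩
      exact hF.adj_left hs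
  have hle := Set.ncard_le_ncard hsub
  rwa [Set.ncard_union_eq hdisj₂, Set.ncard_union_eq hdisj₁, (hF.injOn_right.mono hB).ncard_image,
    hF.injOn_left.ncard_image] at hle

theorem ncard_add_le [Finite V] (hk : 1 ≤ k) (hG : ¬ G.DefectiveColorable ![k, k])
    (hH : (G.isolate (X '' S)).DefectiveColorable ![k, k]) :
    S.ncard + k + 1 ≤ (G.neighborSet v).ncard := by
  obtain ⟨f, hf⟩ := hH
  have hlow := hF.le_ncard_monoNeighborSet_add_ncard hk hG hf
  have hup := hF.ncard_monoNeighborSet_add_ncard_add_ncard_le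
    (B := {s ∈ S | f (Y s) ≠ f v ∧ k ≤ ((G.isolate (X '' S)).monoNeighborSet f (Y s)).ncard})
    (Set.sep_subset _ _) fun _ hs => hs.2.1
  omega

end IsTerribleFan

def terribleTriangles (G : SimpleGraph V) (v : V) : Set (Set V) :=
  {s | ∃ x y : V, x ≠ y ∧ s = {x, y} ∧ G.Adj v x ∧ G.Adj v y ∧ G.Adj x y ∧
    ((G.neighborSet x).ncard = 2 ∨ (G.neighborSet y).ncard = 2)}

theorem HasNoCycleOfLength.exists_isTerribleFan (h4 : G.HasNoCycleOfLength 4) (v : V) :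
    ∃ X Y : Set V → V, G.IsTerribleFan v (G.terribleTriangles v) X Y := by
  have hrep : ∀ s ∈ G.terribleTriangles v, ∃ x y : V, s = {x, y} ∧ x ≠ y ∧ G.Adj v x ∧
      G.Adj v y ∧ G.Adj x y ∧ (G.neighborSet x).ncard = 2 := by
    rintro s ⟨x, y, hxy, rfl, hvx, hvy, hadj, h2 | h2⟩
    · exact ⟨x, y, rfl, hxy, hvx, hvy, hadj, h2⟩
    · exact ⟨y, x, Set.pair_comm x y, hxy.symm, hvy, hvx, hadj.symm, h2⟩
  have : Nonempty V := ⟨v⟩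
  choose! X Y hpair hne hvX hvY hXY hX2 using hrep
  have hX : ∀ s ∈ G.terribleTriangles v, X s ∈ s := fun s hs => by
    have h := Set.mem_insert (X s) {Y s}
    rwa [← hpair s hs] at h
  have hY : ∀ s ∈ G.terribleTriangles v, Y s ∈ s := fun s hs => by
    have h := Set.mem_insert_of_mem (X s) (Set.mem_singleton (Y s))
    rwa [← hpair s hs] at h
  have hsame : ∀ s ∈ G.terribleTriangles v, ∀ s' ∈ G.terribleTriangles v, ∀ u ∈ s, u ∈ s' →
      s = s' := fun s hs s' hs' u hu hu' =>
    calc s = {X s, Y s} := hpair s hs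
      _ = {X s', Y s'} := h4.pair_eq_of_mem_of_mem (hvX s hs) (hvY s hs) (hXY s hs)
          (hvX s' hs') (hvY s' hs') (hXY s' hs') (hpair s hs ▸ hu) (hpair s' hs' ▸ hu')
      _ = s' := (hpair s' hs').symm
  refine ⟨X, Y, fun s hs => ?_, hvY,
    fun s hs s' hs' h => hsame s hs s' hs' _ (hX s hs) (h ▸ hX s' hs'),
    fun s hs s' hs' h => hsame s hs s' hs' _ (hY s hs) (h ▸ hY s' hs'), fun s hs s' hs' h => ?_⟩
  · have hsub : ({v, Y s} : Set V) ⊆ G.neighborSet (X s) := by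
      rintro _ (rfl | rfl)
      exacts [(hvX s hs).symm, hXY s hs]
    refine (Set.eq_of_subset_of_ncard_le hsub ?_ (Set.finite_of_ncard_ne_zero ?_)).symm
    · rw [hX2 s hs, Set.ncard_pair (hvY s hs).ne]
    · rw [hX2 s hs]; norm_num
  · obtain rfl := hsame s hs s' hs' _ (hX s hs) (h ▸ hY s' hs')
    exact hne s hs h

end TerribleFan

end SimpleGraph

theorem stmt16_general (V : Type) [Fintype V] (G : SimpleGraph V)
    (hp : G.Planar) (h4 : G.HasNoCycleOfLength 4)
    (hnc : ¬ G.DefectiveColorable ![5, 5])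
    (hmin : ∀ (W : Type) [Fintype W] (H : SimpleGraph W), H.Planar →
      H.HasNoCycleOfLength 4 → ¬ H.DefectiveColorable ![5, 5] →
      {v : V | 3 ≤ (G.neighborSet v).ncard}.ncard
        ≤ {w : W | 3 ≤ (H.neighborSet w).ncard}.ncard ∧
      ({w : W | 3 ≤ (H.neighborSet w).ncard}.ncard
          = {v : V | 3 ≤ (G.neighborSet v).ncard}.ncard →
        G.edgeSet.ncard ≤ H.edgeSet.ncard))
    (v : V) :
    -- terrible 3-faces incident with `v`, identified with the triangles through `v`
    -- containing a vertex of degree 2 (in a 4-cycle-free plane graph distinct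
    -- 3-faces incident with `v` give distinct such triangles)
    {s : Set V | ∃ x y : V, x ≠ y ∧ s = {x, y} ∧ G.Adj v x ∧ G.Adj v y ∧ G.Adj x y ∧
        ((G.neighborSet x).ncard = 2 ∨ (G.neighborSet y).ncard = 2)}.ncard
      ≤ min ((G.neighborSet v).ncard / 2) ((G.neighborSet v).ncard - 6) := by
  change (G.terribleTriangles v).ncard ≤ _
  obtain ⟨X, Y, hF⟩ := h4.exists_isTerribleFan v
  rcases (G.terribleTriangles v).eq_empty_or_nonempty with hS | ⟨s, hs⟩
  · rw [hS, Set.ncard_empty]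
    exact Nat.zero_le _
  have hH : (G.isolate (X '' G.terribleTriangles v)).DefectiveColorable ![5, 5] := by
    by_contra hH
    have hle := G.isolate_le (X '' G.terribleTriangles v)
    obtain ⟨hhigh, hedges⟩ := hmin V _ (hp.anti hle) (h4.anti hle) hH
    have hhigh' := ncard_setOf_le_ncard_neighborSet_mono hle 3
    have hlt := Set.ncard_lt_ncard (edgeSet_ssubset_edgeSet.2
      (isolate_lt (Set.mem_image_of_mem X hs) (hF.adj_left hs).symm))
    have := hedges (le_antisymm hhigh' hhigh)
    omega
  have := hF.two_mul_ncard_le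
  have := hF.ncard_add_le (by norm_num) hnc hH
  omega

theorem stmt16 (V : Type) [Fintype V] (G : SimpleGraph V)
    (hp : G.Planar) (h4 : G.HasNoCycleOfLength 4)
    (hnc : ¬ G.DefectiveColorable ![5, 5])
    (hmin : ∀ (W : Type) [Fintype W] (H : SimpleGraph W), H.Planar →
      H.HasNoCycleOfLength 4 → ¬ H.DefectiveColorable ![5, 5] →
      {v : V | 3 ≤ (G.neighborSet v).ncard}.ncard
        ≤ {w : W | 3 ≤ (H.neighborSet w).ncard}.ncard ∧
      ({w : W | 3 ≤ (H.neighborSet w).ncard}.ncard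
          = {v : V | 3 ≤ (G.neighborSet v).ncard}.ncard →
        G.edgeSet.ncard ≤ H.edgeSet.ncard))
    (v : V) (hv : 7 ≤ (G.neighborSet v).ncard) :
    -- terrible 3-faces incident with `v`, identified with the triangles through `v`
    -- containing a vertex of degree 2 (in a 4-cycle-free plane graph distinct
    -- 3-faces incident with `v` give distinct such triangles)
    {s : Set V | ∃ x y : V, x ≠ y ∧ s = {x, y} ∧ G.Adj v x ∧ G.Adj v y ∧ G.Adj x y ∧
        ((G.neighborSet x).ncard = 2 ∨ (G.neighborSet y).ncard = 2)}.ncard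
      ≤ min ((G.neighborSet v).ncard / 2) ((G.neighborSet v).ncard - 6) :=
  stmt16_general V G hp h4 hnc hmin v
end
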